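/- With notation as in the Q-value setup, for all z, w ∈ D(H)Q: (a) qval_ψ(z + w) ≥ min{qval_ψ(z), qval_ψ(w)}; (b) qval_ψ(z·w) ≥ qval_ψ(z) + qval_ψ(w) − |ψ|_Q, where the Q-defect is |ψ|_Q = max_{p,q∈Q} | qval_ψ(s(p)s(q)s(pq)⁻¹) − qval_ψ(p) − qval_ψ(q) + qval_ψ(pq) |. -/

import Mathlib

/-!
Both inequalities are checked against each term `ψ^a(x_r) + qwt r` of the infimum defining the
`Q`-value. Part (a) is the ultrametric inequality for `ψ^a`. In part (b) the `r`-coefficient of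
`z w` is `∑_p z_p · s(p) w_q s(p)⁻¹ · μ(p, q)` with `q = p⁻¹ r`, and `ψ^a` of its `p`-th summand
is `ψ^a(z_p) + ψ^{ap}(w_q) + ψ^a(μ(p, q))`: conjugating by `s(a) s(p)` rather than by `s(ap)`
only adds a conjugation by `μ(a, p) ∈ H`, which `ψ` does not see. The first two terms are at
least `qval z - qwt p` and `qval w - qwt q`. Since `qval (δ_q 1) = qwt q` and `qwt 1 = 0`, the
third is at least `qval (δ_1 μ(p, q)) ≥ qwt p + qwt q - qwt r - |ψ|_Q` by definition of the
defect, and the weights `qwt p`, `qwt q` cancel.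
-/

noncomputable section

open scoped Classical

variable {G Q D : Type*} [Group G] [Group Q] [Fintype Q] [DivisionRing D]

/-- The weight `(1/|Q|) ψ (s q ^ |Q|)` appearing in the `Q`-value. -/
def qwt (π : G →* Q) (s : Q → G) (hs : ∀ q, π (s q) = q)
    (ι : ↥π.ker →* Dˣ) (ψ : D → EReal) (q : Q) : EReal :=
  (((Fintype.card Q : ℝ)⁻¹ : ℝ) : EReal) *
    ψ (ι ⟨s q ^ Fintype.card Q, by
      rw [MonoidHom.mem_ker, map_pow, hs, pow_card_eq_one]⟩)

/-- The `Q`-value `qval ψ x = min_{p,q} { ψ^p (x_q) + (1/|Q|) ψ (s q ^ |Q|) }`. -/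
def qval (π : G →* Q) (s : Q → G) (hs : ∀ q, π (s q) = q)
    (c : G →* D ≃+* D) (ι : ↥π.ker →* Dˣ) (ψ : D → EReal) (x : Q → D) : EReal :=
  ⨅ p : Q, ⨅ q : Q, (ψ (c (s p) (x q)) + qwt π s hs ι ψ q)

/-- The element of `D(H) Q` supported at `q` with coefficient `d`. -/
def qdelta (Q : Type*) [Group Q] (q : Q) (d : D) : Q → D :=
  fun p => if p = q then d else 0

/-- The `2`-cocycle value `μ (p, q) = s p * s q * (s (p q))⁻¹ ∈ H`, regarded inside
`D = D(H)` via `ι`. -/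
def muD (π : G →* Q) (s : Q → G) (hs : ∀ q, π (s q) = q)
    (ι : ↥π.ker →* Dˣ) (p q : Q) : D :=
  (ι ⟨s p * s q * (s (p * q))⁻¹, by
    simp [MonoidHom.mem_ker, map_mul, map_inv, hs, ← mul_assoc]⟩ : Dˣ)

/-- The twisted multiplication on `D(H) Q`:
`x_q q · y_p p = x_q · (s q · y_p · s q⁻¹) · (s q s p s (q p)⁻¹) · q p`. -/
def qmul (π : G →* Q) (s : Q → G) (hs : ∀ q, π (s q) = q)
    (c : G →* D ≃+* D) (ι : ↥π.ker →* Dˣ) (z w : Q → D) : Q → D :=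
  fun r => ∑ p : Q, z p * c (s p) (w (p⁻¹ * r)) * muD π s hs ι p (p⁻¹ * r)

/-- The `Q`-defect
`|ψ|_Q = max_{p,q} |qval ψ (μ (p, q)) − qval ψ p − qval ψ q + qval ψ (p q)|`. -/
def qdefect (π : G →* Q) (s : Q → G) (hs : ∀ q, π (s q) = q)
    (c : G →* D ≃+* D) (ι : ↥π.ker →* Dˣ) (ψ : D → EReal) : EReal :=
  ⨆ p : Q, ⨆ q : Q,
    (fun e : EReal => max e (-e))
      (qval π s hs c ι ψ (qdelta Q 1 (muD π s hs ι p q)) -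
        qval π s hs c ι ψ (qdelta Q p 1) - qval π s hs c ι ψ (qdelta Q q 1) +
        qval π s hs c ι ψ (qdelta Q (p * q) 1))

structure IsRealAddValuation (ψ : D → EReal) : Prop where
  map_zero : ψ 0 = ⊤
  ne_top_and_ne_bot : ∀ x : D, x ≠ 0 → ψ x ≠ ⊤ ∧ ψ x ≠ ⊥
  map_mul : ∀ x y : D, x ≠ 0 → y ≠ 0 → ψ (x * y) = ψ x + ψ y
  min_le_map_add : ∀ x y : D, min (ψ x) (ψ y) ≤ ψ (x + y)

namespace IsRealAddValuation

variable {ψ : D → EReal} (hψ : IsRealAddValuation ψ)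
include hψ

theorem coe_toReal {x : D} (hx : x ≠ 0) : ((ψ x).toReal : EReal) = ψ x :=
  EReal.coe_toReal (hψ.ne_top_and_ne_bot x hx).1 (hψ.ne_top_and_ne_bot x hx).2

theorem map_one : ψ 1 = 0 := by
  have h := hψ.map_mul 1 1 one_ne_zero one_ne_zero
  rw [mul_one, ← hψ.coe_toReal one_ne_zero] at h
  rw [← hψ.coe_toReal one_ne_zero]
  norm_cast at h ⊢
  linarith

theorem map_units_conj (u : Dˣ) (y : D) : ψ (u * y * ((u⁻¹ : Dˣ) : D)) = ψ y := by
  rcases eq_or_ne y 0 with rfl | hy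
  · simp
  have hinv : ψ u + ψ ((u⁻¹ : Dˣ) : D) = 0 := by
    rw [← hψ.map_mul _ _ u.ne_zero (u⁻¹).ne_zero, Units.mul_inv, hψ.map_one]
  rw [hψ.map_mul _ _ (mul_ne_zero u.ne_zero hy) (u⁻¹).ne_zero, hψ.map_mul _ _ u.ne_zero hy]
  rw [← hψ.coe_toReal u.ne_zero, ← hψ.coe_toReal (u⁻¹).ne_zero] at hinv ⊢
  rw [← hψ.coe_toReal hy]
  norm_cast at hinv ⊢
  linarith

end IsRealAddValuation

theorem EReal.add_add_sub_le_of_le {x y d a b m r : EReal} {p q : ℝ} (hx : x ≤ a + p)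
    (hy : y ≤ b + q) (hd : -d ≤ m - p - q + r) : x + y - d ≤ a + b + m + r := by
  have hcancel : (a + p) + (b + q) + (m - p - q + r) = a + b + m + r := by
    rw [sub_eq_add_neg, sub_eq_add_neg, ← EReal.coe_neg, ← EReal.coe_neg]
    calc _ = a + b + m + r + ((p + -p : ℝ) + (q + -q : ℝ)) := by push_cast; ac_rfl
      _ = _ := by simp
  rw [sub_eq_add_neg, ← hcancel]
  exact add_le_add (add_le_add hx hy) hd

section QValue

variable (π : G →* Q) (s : Q → G) (hs : ∀ q, π (s q) = q) (c : G →* D ≃+* D)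
  (ι : ↥π.ker →* Dˣ) (ψ : D → EReal)

theorem qval_le (x : Q → D) (a q : Q) :
    qval π s hs c ι ψ x ≤ ψ (c (s a) (x q)) + qwt π s hs ι ψ q := by
  rw [qval]
  exact iInf_le_of_le a (iInf_le _ q)

theorem le_qval_iff {x : Q → D} {C : EReal} :
    C ≤ qval π s hs c ι ψ x ↔ ∀ a q, C ≤ ψ (c (s a) (x q)) + qwt π s hs ι ψ q := by
  rw [qval]
  exact le_iInf₂_iff

theorem exists_qwt_eq_coe (hψ : IsRealAddValuation ψ) (q : Q) :
    ∃ v : ℝ, qwt π s hs ι ψ q = v := by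
  rw [qwt, ← hψ.coe_toReal (Units.ne_zero _), ← EReal.coe_mul]
  exact ⟨_, rfl⟩

theorem qwt_one (hs1 : s 1 = 1) (hψ : IsRealAddValuation ψ) : qwt π s hs ι ψ 1 = 0 := by
  have hpow : (⟨s 1 ^ Fintype.card Q, by simp [hs1]⟩ : ↥π.ker) = 1 := Subtype.ext (by simp [hs1])
  rw [qwt, hpow, map_one, Units.val_one, hψ.map_one, mul_zero]

theorem qval_qdelta_one_right (hψ : IsRealAddValuation ψ) (q : Q) :
    qval π s hs c ι ψ (qdelta Q q 1) = qwt π s hs ι ψ q := by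
  refine le_antisymm ?_ ((le_qval_iff π s hs c ι ψ).2 fun p q' => ?_)
  · simpa [qdelta, hψ.map_one] using qval_le π s hs c ι ψ (qdelta Q q 1) 1 q
  · by_cases h : q' = q
    · simp [h, qdelta, hψ.map_one]
    · obtain ⟨v, hv⟩ := exists_qwt_eq_coe π s hs ι ψ hψ q'
      simp [qdelta, h, hψ.map_zero, hv]

theorem qval_qdelta_one_left_le (hs1 : s 1 = 1) (hψ : IsRealAddValuation ψ) (d : D) (a : Q) :
    qval π s hs c ι ψ (qdelta Q 1 d) ≤ ψ (c (s a) d) := by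
  simpa [qdelta, qwt_one π s hs ι ψ hs1 hψ] using qval_le π s hs c ι ψ (qdelta Q 1 d) a 1

theorem neg_qdefect_le (hs1 : s 1 = 1) (hψ : IsRealAddValuation ψ) (a p q : Q) :
    -qdefect π s hs c ι ψ ≤ ψ (c (s a) (muD π s hs ι p q)) - qwt π s hs ι ψ p -
      qwt π s hs ι ψ q + qwt π s hs ι ψ (p * q) := by
  have hdefect : -qdefect π s hs c ι ψ ≤
      qval π s hs c ι ψ (qdelta Q 1 (muD π s hs ι p q)) - qval π s hs c ι ψ (qdelta Q p 1) -
        qval π s hs c ι ψ (qdelta Q q 1) + qval π s hs c ι ψ (qdelta Q (p * q) 1) :=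
    EReal.neg_le.1 ((le_max_right _ _).trans (le_iSup₂_of_le p q le_rfl))
  rw [qval_qdelta_one_right π s hs c ι ψ hψ, qval_qdelta_one_right π s hs c ι ψ hψ,
    qval_qdelta_one_right π s hs c ι ψ hψ] at hdefect
  have hμ := qval_qdelta_one_left_le π s hs c ι ψ hs1 hψ (muD π s hs ι p q) a
  exact hdefect.trans (add_le_add_left (EReal.sub_le_sub (EReal.sub_le_sub hμ le_rfl) le_rfl) _)

theorem min_qval_le_qval_add (hψ : IsRealAddValuation ψ) (z w : Q → D) :
    min (qval π s hs c ι ψ z) (qval π s hs c ι ψ w) ≤ qval π s hs c ι ψ (fun r => z r + w r) := by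
  refine (le_qval_iff π s hs c ι ψ).2 fun a q => ?_
  calc min (qval π s hs c ι ψ z) (qval π s hs c ι ψ w)
      ≤ min (ψ (c (s a) (z q)) + qwt π s hs ι ψ q) (ψ (c (s a) (w q)) + qwt π s hs ι ψ q) :=
        min_le_min (qval_le π s hs c ι ψ z a q) (qval_le π s hs c ι ψ w a q)
    _ = min (ψ (c (s a) (z q))) (ψ (c (s a) (w q))) + qwt π s hs ι ψ q := min_add_add_right ..
    _ ≤ ψ (c (s a) (z q + w q)) + qwt π s hs ι ψ q := by
        rw [map_add]
        gcongr
        exact hψ.min_le_map_add _ _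

omit [Fintype Q] in
theorem psi_c_ker_mul (hinner : ∀ (h : ↥π.ker) (x : D),
      c (h : G) x = (ι h : D) * x * ((ι h)⁻¹ : Dˣ))
    (hψ : IsRealAddValuation ψ) (k : ↥π.ker) (g : G) (y : D) :
    ψ (c (k * g) y) = ψ (c g y) := by
  rw [map_mul, RingAut.mul_apply, hinner, hψ.map_units_conj]

omit [Fintype Q] in
theorem psi_c_s_qmul_summand (hinner : ∀ (h : ↥π.ker) (x : D),
      c (h : G) x = (ι h : D) * x * ((ι h)⁻¹ : Dˣ))
    (hψ : IsRealAddValuation ψ) (a p q : Q) {x y : D} (hx : x ≠ 0) (hy : y ≠ 0) :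
    ψ (c (s a) (x * c (s p) y * muD π s hs ι p q)) =
      ψ (c (s a) x) + ψ (c (s (a * p)) y) + ψ (c (s a) (muD π s hs ι p q)) := by
  have hμ : s a * s p * (s (a * p))⁻¹ ∈ π.ker := by simp [hs, ← mul_assoc]
  have hsplit : s a * s p = (⟨_, hμ⟩ : ↥π.ker) * s (a * p) := by simp
  rw [map_mul, map_mul, hψ.map_mul _ _ (by simpa using ⟨hx, hy⟩) (by simp [muD]),
    hψ.map_mul _ _ (by simpa using hx) (by simpa using hy), ← RingAut.mul_apply, ← map_mul,
    hsplit, psi_c_ker_mul π c ι ψ hinner hψ]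

theorem qval_add_qval_sub_qdefect_le_qmul_summand (hs1 : s 1 = 1) (hinner : ∀ (h : ↥π.ker) (x : D),
      c (h : G) x = (ι h : D) * x * ((ι h)⁻¹ : Dˣ))
    (hψ : IsRealAddValuation ψ) (z w : Q → D) (a p q : Q) :
    qval π s hs c ι ψ z + qval π s hs c ι ψ w - qdefect π s hs c ι ψ ≤
      ψ (c (s a) (z p * c (s p) (w q) * muD π s hs ι p q)) + qwt π s hs ι ψ (p * q) := by
  by_cases hzw : z p = 0 ∨ w q = 0
  · obtain ⟨R, hR⟩ := exists_qwt_eq_coe π s hs ι ψ hψ (p * q)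
    rcases hzw with h | h <;> simp [h, hR, hψ.map_zero]
  obtain ⟨hz0, hw0⟩ := not_or.1 hzw
  obtain ⟨P, hP⟩ := exists_qwt_eq_coe π s hs ι ψ hψ p
  obtain ⟨P', hP'⟩ := exists_qwt_eq_coe π s hs ι ψ hψ q
  have hz := qval_le π s hs c ι ψ z a p
  have hw := qval_le π s hs c ι ψ w (a * p) q
  have hd := neg_qdefect_le π s hs c ι ψ hs1 hψ a p q
  rw [hP] at hz hd
  rw [hP'] at hw hd
  rw [psi_c_s_qmul_summand π s hs c ι ψ hinner hψ a p q hz0 hw0]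
  exact EReal.add_add_sub_le_of_le hz hw hd

theorem qval_add_qval_sub_qdefect_le_qval_qmul (hs1 : s 1 = 1)
    (hinner : ∀ (h : ↥π.ker) (x : D), c (h : G) x = (ι h : D) * x * ((ι h)⁻¹ : Dˣ))
    (hψ : IsRealAddValuation ψ) (z w : Q → D) :
    qval π s hs c ι ψ z + qval π s hs c ι ψ w - qdefect π s hs c ι ψ ≤
      qval π s hs c ι ψ (qmul π s hs c ι z w) := by
  refine (le_qval_iff π s hs c ι ψ).2 fun a r => ?_
  obtain ⟨R, hR⟩ := exists_qwt_eq_coe π s hs ι ψ hψ r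
  rw [hR, qmul, map_sum]
  refine Finset.sum_induction _ (fun x => _ ≤ ψ x + R) (fun x y hx hy => ?_)
    (by simp [hψ.map_zero]) fun p _ => ?_
  · calc _ ≤ min (ψ x + R) (ψ y + R) := le_min hx hy
      _ = min (ψ x) (ψ y) + R := min_add_add_right ..
      _ ≤ ψ (x + y) + R := by gcongr; exact hψ.min_le_map_add x y
  · simpa [hR] using
      qval_add_qval_sub_qdefect_le_qmul_summand π s hs c ι ψ hs1 hinner hψ z w a p (p⁻¹ * r)

end QValue

theorem stmt_14_general (π : G →* Q) (s : Q → G)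
    (hs : ∀ q, π (s q) = q) (hs1 : s 1 = 1)
    (c : G →* D ≃+* D) (ι : ↥π.ker →* Dˣ)
    (hinner : ∀ (h : ↥π.ker) (x : D),
      c (h : G) x = (ι h : D) * x * ((ι h)⁻¹ : Dˣ))
    (ψ : D → EReal) (hψ0 : ψ 0 = ⊤)
    (hψreal : ∀ x : D, x ≠ 0 → ψ x ≠ ⊤ ∧ ψ x ≠ ⊥)
    (hψmul : ∀ x y : D, x ≠ 0 → y ≠ 0 → ψ (x * y) = ψ x + ψ y)
    (hψadd : ∀ x y : D, min (ψ x) (ψ y) ≤ ψ (x + y))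
    (z w : Q → D) :
    (min (qval π s hs c ι ψ z) (qval π s hs c ι ψ w) ≤
      qval π s hs c ι ψ (fun r => z r + w r)) ∧
    (qval π s hs c ι ψ z + qval π s hs c ι ψ w - qdefect π s hs c ι ψ ≤
      qval π s hs c ι ψ (qmul π s hs c ι z w)) := by
  have hψ : IsRealAddValuation ψ := ⟨hψ0, hψreal, hψmul, hψadd⟩
  exact ⟨min_qval_le_qval_add π s hs c ι ψ hψ z w,
    qval_add_qval_sub_qdefect_le_qval_qmul π s hs c ι ψ hs1 hinner hψ z w⟩

/-- With notation as in the `Q`-value setup, for all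
`z, w ∈ D(H) Q`: (a) `qval ψ (z + w) ≥ min (qval ψ z) (qval ψ w)`;
(b) `qval ψ (z w) ≥ qval ψ z + qval ψ w − |ψ|_Q`. -/
theorem stmt_14 (π : G →* Q) (hπ : Function.Surjective π) (s : Q → G)
    (hs : ∀ q, π (s q) = q) (hs1 : s 1 = 1)
    (c : G →* D ≃+* D) (ι : ↥π.ker →* Dˣ)
    (hcι : ∀ (g : G) (h : ↥π.ker),
      c g (ι h) = ι ⟨g * h * g⁻¹, Subgroup.Normal.conj_mem inferInstance _ h.2 g⟩)
    (hinner : ∀ (h : ↥π.ker) (x : D),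
      c (h : G) x = (ι h : D) * x * ((ι h)⁻¹ : Dˣ))
    (ψ : D → EReal) (hψ0 : ψ 0 = ⊤)
    (hψreal : ∀ x : D, x ≠ 0 → ψ x ≠ ⊤ ∧ ψ x ≠ ⊥)
    (hψmul : ∀ x y : D, x ≠ 0 → y ≠ 0 → ψ (x * y) = ψ x + ψ y)
    (hψadd : ∀ x y : D, min (ψ x) (ψ y) ≤ ψ (x + y))
    (z w : Q → D) :
    (min (qval π s hs c ι ψ z) (qval π s hs c ι ψ w) ≤
      qval π s hs c ι ψ (fun r => z r + w r)) ∧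
    (qval π s hs c ι ψ z + qval π s hs c ι ψ w - qdefect π s hs c ι ψ ≤
      qval π s hs c ι ψ (qmul π s hs c ι z w)) :=
  stmt_14_general π s hs hs1 c ι hinner ψ hψ0 hψreal hψmul hψadd z w
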